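/- Let N ≥ 2 and let r be an ultrametric on {1,…,N} with r(i,j) > 0 for i ≠ j, whose enumeration is length-minimal. Define the depths d_n(r) := (1/2)·max_{1 ≤ i,j ≤ n} r(i,j) for 1 ≤ n ≤ N. Then for every n with 2 ≤ n ≤ N and every k with 1 ≤ k ≤ n−1: r(k, n) = max( r(k, n−1), 2·( ℓ_n(r) − ℓ_{n−1}(r) − ( d_n(r) − d_{n−1}(r) ) ) ), where r(n−1, n−1) = 0 is understood in the case k = n−1. In particular, the distance matrix (r(i,j))_{1 ≤ i < j ≤ N} is determined recursively by the sequence (ℓ_1(r),…,ℓ_N(r)). -/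

import Mathlib

open Finset

/-- `r` is an ultrametric matrix on `{1,…,N}` (encoded by `Fin N`): nonnegative,
symmetric, vanishing on the diagonal, and satisfying the strong triangle inequality. -/
def IsUltramat {N : ℕ} (r : Fin N → Fin N → ℝ) : Prop :=
  (∀ i j, 0 ≤ r i j) ∧ (∀ i j, r i j = r j i) ∧ (∀ i, r i i = 0) ∧
    (∀ i j k, r i k ≤ max (r i j) (r j k))

/-- `ell r n` is the total length `ℓ_n(r)` of the subtree spanned by the first `n`
points: half the minimum of `Σ_{i=1}^n r(i,σ(i))` over single-`n`-cycle permutations `σ`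
of `{1,…,n}`, for `2 ≤ n ≤ N`; and `0` otherwise (in particular `ℓ_1(r) = 0`). -/
noncomputable def ell {N : ℕ} (r : Fin N → Fin N → ℝ) (n : ℕ) : ℝ :=
  if h : 2 ≤ n ∧ n ≤ N then
    (1 / 2) * sInf { x : ℝ | ∃ σ : Equiv.Perm (Fin n), σ.IsCycle ∧ σ.support = Finset.univ ∧
      x = ∑ i : Fin n, r (Fin.castLE h.2 i) (Fin.castLE h.2 (σ i)) }
  else 0

/-- The enumeration of the points of `r` is length-minimal: for every permutation `τ` of
`{1,…,N}`, the vector `(ℓ_1(r),…,ℓ_N(r))` is lexicographically at most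
`(ℓ_1(r^τ),…,ℓ_N(r^τ))`, where `r^τ(i,j) = r(τ(i),τ(j))`. -/
def LengthMinimal {N : ℕ} (r : Fin N → Fin N → ℝ) : Prop :=
  ∀ τ : Equiv.Perm (Fin N),
    (∀ n, n ≤ N → ell r n = ell (fun i j => r (τ i) (τ j)) n) ∨
    (∃ n, n ≤ N ∧ (∀ m, m < n → ell r m = ell (fun i j => r (τ i) (τ j)) m) ∧
      ell r n < ell (fun i j => r (τ i) (τ j)) n)

/-- `depthFn r n` is the depth `d_n(r) = (1/2)·max_{1 ≤ i,j ≤ n} r(i,j)` of the subtree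
spanned by the first `n` points, for `1 ≤ n ≤ N`; and `0` otherwise. -/
noncomputable def depthFn {N : ℕ} (r : Fin N → Fin N → ℝ) (n : ℕ) : ℝ :=
  if h : 1 ≤ n ∧ n ≤ N then
    (1 / 2) * sSup { x : ℝ | ∃ i j : Fin n, x = r (Fin.castLE h.2 i) (Fin.castLE h.2 j) }
  else 0

/-!
`2 ℓ_n` is the least cost of a closed tour through the first `n` points. For an ultrametric,
inserting point `n + 1` into an optimal tour of the first `n` points (next to a suitable edge)
and deleting it from an optimal tour of the first `n + 1` points give
`2 ℓ_{n+1} = 2 ℓ_n + max(m, 2m - 2d_n)`, where `m` is the distance from point `n + 1` to the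
first `n` points; also `2 d_{n+1} = max(2 d_n, m)`. Hence `2 (ℓ_{n+1} - ℓ_n - (d_{n+1} - d_n)) = m`.

Length-minimality forces the enumeration to be greedy: if a later point were strictly closer to
the first `n` points than point `n + 1`, swapping the two would keep `ℓ_1, …, ℓ_n` and `d_n` and
decrease `ℓ_{n+1}`. By induction, greedy order in an ultrametric makes point `n` a nearest
predecessor of point `n + 1`, so `m = r(n, n+1)`, and `r(k, n+1) = max(r(k, n), r(n, n+1))`
is the ultrametric equality for the triangle `k, n, n + 1`.
-/

namespace List

variable {α : Type*} (q : α → α → ℝ)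

def cycleCost (l : List α) : ℝ := (zipWith q l (l.rotate 1)).sum

lemma cycleCost_rotate (l : List α) (n : ℕ) : cycleCost q (l.rotate n) = cycleCost q l := by
  rw [cycleCost, rotate_rotate, Nat.add_comm, ← rotate_rotate,
    ← zipWith_rotate_distrib q l (l.rotate 1) n (length_rotate ..).symm,
    (rotate_perm _ _).sum_eq, cycleCost]

lemma IsRotated.cycleCost_eq {l l' : List α} (h : l ~r l') : cycleCost q l = cycleCost q l' := by
  obtain ⟨n, rfl⟩ := h
  exact (cycleCost_rotate q l n).symm

lemma sum_zipWith_cons_append_singleton (M : List α) (v x : α) :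
    (zipWith q (v :: M) (M ++ [x])).sum
      = (zipWith q (v :: M) M).sum + q ((v :: M).getLast (cons_ne_nil v M)) x := by
  induction M generalizing v with
  | nil => simp
  | cons a M ih => simp [ih, add_assoc]

lemma cycleCost_cons (t : α) {L : List α} (hL : L ≠ []) :
    cycleCost q (t :: L) = cycleCost q L
      + (q (L.getLast hL) t + q t (L.head hL) - q (L.getLast hL) (L.head hL)) := by
  obtain ⟨v, M, rfl⟩ := exists_cons_of_ne_nil hL
  simp only [cycleCost, rotate_cons_succ, rotate_zero, zipWith_cons_cons, List.sum_cons,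
    sum_zipWith_cons_append_singleton, head_cons, getLast_cons (cons_ne_nil v M)]
  ring

lemma cycleCost_map {β : Type*} (f : β → α) (l : List β) :
    cycleCost q (l.map f) = cycleCost (fun a b => q (f a) (f b)) l := by
  rw [cycleCost, ← map_rotate, zipWith_map, cycleCost]

lemma sum_formPerm_eq_cycleCost [Fintype α] [DecidableEq α] {l : List α} (hnd : l.Nodup)
    (hl : ∀ x, x ∈ l) : ∑ x, q x (l.formPerm x) = cycleCost q l := by
  have huniv : l.toFinset = Finset.univ := Finset.eq_univ_of_forall fun x => mem_toFinset.2 (hl x)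
  rw [← huniv, sum_toFinset _ hnd, cycleCost]
  congr 1
  refine ext_getElem (by simp) fun i h₁ h₂ => ?_
  simp [getElem_rotate, formPerm_apply_getElem _ hnd]

/-- A pair of cyclically consecutive entries of `l` is presented as `(getLast, head)` of a
rotation of `l`. -/
lemma exists_isRotated_getLast_head {P : α → Prop} {l : List α} {a b : α} (ha : a ∈ l)
    (hb : b ∈ l) (hPa : P a) (hPb : ¬ P b) :
    ∃ (l' : List α) (h : l' ≠ []), l' ~r l ∧ P (l'.getLast h) ∧ ¬ P (l'.head h) := by
  obtain ⟨l₁, l₂, rfl⟩ := append_of_mem ha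
  have hrot : a :: (l₂ ++ l₁) ~r l₁ ++ a :: l₂ := by
    simpa using (isRotated_append (l := l₁) (l' := a :: l₂)).symm
  have hchain : ¬ IsChain (fun x y => P x → P y) (a :: (l₂ ++ l₁)) := fun h =>
    hPb (h.induction P _ (fun _ _ hxy => hxy) (fun _ => hPa) b (hrot.mem_iff.2 hb))
  rw [isChain_iff_forall_rel_of_append_cons_cons] at hchain
  push Not at hchain
  obtain ⟨w, v, m₁, m₂, heq, hPw, hPv⟩ := hchain
  refine ⟨v :: m₂ ++ (m₁ ++ [w]), by simp, ?_, by simpa using hPw, by simpa using hPv⟩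
  refine IsRotated.trans ?_ (heq ▸ hrot)
  simpa using (isRotated_append (l := m₁ ++ [w]) (l' := v :: m₂)).symm

end List

namespace Ultramat

variable {N : ℕ}

/-- The first `n` points are the indices `0, …, n - 1`; the point added at step `c + 1` is
`⟨c, _⟩`. -/
def initial (N n : ℕ) : Finset (Fin N) := {x | x.1 < n}

@[simp] lemma mem_initial {n : ℕ} {x : Fin N} : x ∈ initial N n ↔ x.1 < n := by simp [initial]

lemma card_initial {n : ℕ} (hn : n ≤ N) : (initial N n).card = n := by
  have : initial N n = Finset.univ.map (Fin.castLEEmb hn) := by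
    ext x
    simp only [mem_initial, Finset.mem_map, Finset.mem_univ, true_and, Fin.castLEEmb_apply]
    exact ⟨fun h => ⟨⟨x.1, h⟩, rfl⟩, fun ⟨y, hy⟩ => hy ▸ y.2⟩
  simp [this]

def tours (N n : ℕ) : Set (List (Fin N)) := {l | l.Nodup ∧ l.toFinset = initial N n}

lemma mem_iff_of_mem_tours {n : ℕ} {l : List (Fin N)} (hl : l ∈ tours N n) {x : Fin N} :
    x ∈ l ↔ x.1 < n := by
  rw [← List.mem_toFinset, hl.2, mem_initial]

lemma length_of_mem_tours {n : ℕ} (hn : n ≤ N) {l : List (Fin N)} (hl : l ∈ tours N n) :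
    l.length = n := by
  rw [← List.toFinset_card_of_nodup hl.1, hl.2, card_initial hn]

lemma mem_tours_of_perm {n : ℕ} {l l' : List (Fin N)} (h : l.Perm l') (hl' : l' ∈ tours N n) :
    l ∈ tours N n :=
  ⟨h.nodup_iff.2 hl'.1, (List.toFinset_eq_of_perm _ _ h).trans hl'.2⟩

lemma cons_mem_tours_succ_iff {c : ℕ} (hc : c < N) {L : List (Fin N)} :
    (⟨c, hc⟩ :: L) ∈ tours N (c + 1) ↔ L ∈ tours N c := by
  have hinit : initial N (c + 1) = insert ⟨c, hc⟩ (initial N c) := by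
    ext x
    simp only [mem_initial, Order.lt_add_one_iff, Finset.mem_insert, Fin.ext_iff]
    omega
  have hnot : (⟨c, hc⟩ : Fin N) ∉ initial N c := by simp
  simp only [tours, Set.mem_ofPred_eq, List.nodup_cons, List.toFinset_cons, hinit]
  constructor
  · rintro ⟨⟨hcL, hnd⟩, hts⟩
    refine ⟨hnd, ?_⟩
    rw [← Finset.erase_insert hnot, ← hts, Finset.erase_insert (mt List.mem_toFinset.1 hcL)]
  · rintro ⟨hnd, hts⟩
    exact ⟨⟨fun h => hnot (hts ▸ List.mem_toFinset.2 h), hnd⟩, hts ▸ rfl⟩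

lemma tours_nonempty {n : ℕ} : (tours N n).Nonempty :=
  ⟨(List.finRange N).filter (fun x => x.1 < n), (List.nodup_finRange N).filter _,
    by ext x; simp⟩

lemma tours_finite (n : ℕ) (hn : n ≤ N) : (tours N n).Finite :=
  (List.finite_length_eq (Fin N) n).subset fun _ hl => length_of_mem_tours hn hl

lemma exists_map_castLE_eq {n : ℕ} (hn : n ≤ N) :
    ∀ {l : List (Fin N)}, (∀ x ∈ l, x.1 < n) → ∃ l₀ : List (Fin n), l₀.map (Fin.castLE hn) = l
  | [], _ => ⟨[], rfl⟩
  | a :: l, h => by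
    obtain ⟨l₀, rfl⟩ := exists_map_castLE_eq hn fun x hx => h x (List.mem_cons_of_mem _ hx)
    exact ⟨⟨a.1, h a List.mem_cons_self⟩ :: l₀, rfl⟩

lemma sum_formPerm_castLE_eq_cycleCost (r : Fin N → Fin N → ℝ) {n : ℕ} (hn : n ≤ N)
    {l₀ : List (Fin n)} (hnd : l₀.Nodup) (hl₀ : ∀ x, x ∈ l₀) :
    ∑ i, r (Fin.castLE hn i) (Fin.castLE hn (l₀.formPerm i))
      = List.cycleCost r (l₀.map (Fin.castLE hn)) := by
  rw [List.cycleCost_map]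
  exact List.sum_formPerm_eq_cycleCost (fun a b => r (Fin.castLE hn a) (Fin.castLE hn b)) hnd hl₀

lemma map_castLE_mem_tours {n : ℕ} (hn : n ≤ N) {l₀ : List (Fin n)} (hnd : l₀.Nodup)
    (hl₀ : ∀ x, x ∈ l₀) : l₀.map (Fin.castLE hn) ∈ tours N n := by
  refine ⟨hnd.map (Fin.castLE_injective hn), ?_⟩
  ext x
  simp only [List.mem_toFinset, List.mem_map, mem_initial]
  exact ⟨fun ⟨y, _, hy⟩ => hy ▸ y.2, fun h => ⟨⟨x.1, h⟩, hl₀ _, rfl⟩⟩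

lemma exists_tour_of_isCycle (r : Fin N → Fin N → ℝ) {n : ℕ} (hn : n ≤ N)
    {σ : Equiv.Perm (Fin n)} (hσ : σ.IsCycle) (hsupp : σ.support = Finset.univ) :
    ∃ l ∈ tours N n, List.cycleCost r l = ∑ i, r (Fin.castLE hn i) (Fin.castLE hn (σ i)) := by
  have hmov : ∀ x, σ x ≠ x := fun x => Equiv.Perm.mem_support.1 (hsupp ▸ Finset.mem_univ x)
  obtain ⟨x₀, hx₀, -⟩ := id hσ
  have hall : ∀ y, y ∈ σ.toList x₀ := fun y =>
    Equiv.Perm.mem_toList_iff.2 ⟨hσ.sameCycle hx₀ (hmov y), Equiv.Perm.mem_support.2 hx₀⟩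
  have hform : (σ.toList x₀).formPerm = σ := by
    rw [Equiv.Perm.formPerm_toList, hσ.cycleOf_eq hx₀]
  refine ⟨_, map_castLE_mem_tours hn (σ.nodup_toList x₀) hall, ?_⟩
  rw [← sum_formPerm_castLE_eq_cycleCost r hn (σ.nodup_toList x₀) hall, hform]

lemma exists_isCycle_of_mem_tours (r : Fin N → Fin N → ℝ) {n : ℕ} (h2 : 2 ≤ n) (hn : n ≤ N)
    {l : List (Fin N)} (hl : l ∈ tours N n) :
    ∃ σ : Equiv.Perm (Fin n), σ.IsCycle ∧ σ.support = Finset.univ ∧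
      List.cycleCost r l = ∑ i, r (Fin.castLE hn i) (Fin.castLE hn (σ i)) := by
  obtain ⟨l₀, rfl⟩ := exists_map_castLE_eq hn fun x hx => (mem_iff_of_mem_tours hl).1 hx
  have hnd : l₀.Nodup := hl.1.of_map _
  have hall : ∀ y, y ∈ l₀ := fun y =>
    (List.mem_map_of_injective (Fin.castLE_injective hn)).1 ((mem_iff_of_mem_tours hl).2 y.2)
  have hlen : 2 ≤ l₀.length := by
    have := length_of_mem_tours hn hl
    rw [List.length_map] at this
    omega
  refine ⟨l₀.formPerm, List.isCycle_formPerm hnd hlen, ?_,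
    (sum_formPerm_castLE_eq_cycleCost r hn hnd hall).symm⟩
  rw [List.support_formPerm_of_nodup l₀ hnd (fun x h => by simp [h] at hlen)]
  exact Finset.eq_univ_of_forall fun y => List.mem_toFinset.2 (hall y)

lemma two_mul_ell_of_two_le (r : Fin N → Fin N → ℝ) {n : ℕ} (h2 : 2 ≤ n) (hn : n ≤ N) :
    2 * ell r n = sInf (List.cycleCost r '' tours N n) := by
  rw [ell, dif_pos ⟨h2, hn⟩, ← mul_assoc, mul_one_div_cancel two_ne_zero, one_mul]
  congr 1
  ext x
  constructor
  · rintro ⟨σ, hσ, hsupp, rfl⟩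
    exact exists_tour_of_isCycle r hn hσ hsupp
  · rintro ⟨l, hl, rfl⟩
    exact exists_isCycle_of_mem_tours r h2 hn hl

lemma two_mul_ell_one {r : Fin N → Fin N → ℝ} (hr : ∀ i, r i i = 0) (hN : 1 ≤ N) :
    2 * ell r 1 = sInf (List.cycleCost r '' tours N 1) := by
  have hzero : ∀ l ∈ tours N 1, List.cycleCost r l = 0 := fun l hl => by
    obtain ⟨x, rfl⟩ := List.length_eq_one_iff.1 (length_of_mem_tours hN hl)
    simp [List.cycleCost, hr]
  rw [Set.image_congr hzero, tours_nonempty.image_const, csInf_singleton, ell, dif_neg (by omega),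
    mul_zero]

lemma two_mul_ell_eq {r : Fin N → Fin N → ℝ} (hr : ∀ i, r i i = 0) {n : ℕ} (h1 : 1 ≤ n)
    (hn : n ≤ N) : 2 * ell r n = sInf (List.cycleCost r '' tours N n) := by
  rcases h1.eq_or_lt with rfl | h2
  · exact two_mul_ell_one hr hn
  · exact two_mul_ell_of_two_le r h2 hn

lemma two_mul_ell_le_cycleCost {r : Fin N → Fin N → ℝ} (hr : ∀ i, r i i = 0) {n : ℕ}
    (h1 : 1 ≤ n) (hn : n ≤ N) {l : List (Fin N)} (hl : l ∈ tours N n) :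
    2 * ell r n ≤ List.cycleCost r l := by
  rw [two_mul_ell_eq hr h1 hn]
  exact csInf_le ((tours_finite n hn).image _).bddBelow ⟨l, hl, rfl⟩

lemma exists_tour_cycleCost_eq {r : Fin N → Fin N → ℝ} (hr : ∀ i, r i i = 0) {n : ℕ}
    (h1 : 1 ≤ n) (hn : n ≤ N) : ∃ l ∈ tours N n, List.cycleCost r l = 2 * ell r n := by
  rw [two_mul_ell_eq hr h1 hn]
  exact (tours_nonempty.image _).csInf_mem ((tours_finite n hn).image _)

noncomputable def nearestDist (r : Fin N → Fin N → ℝ) (c : ℕ) (t : Fin N) : ℝ :=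
  sInf ((fun x => r x t) '' initial N c)

noncomputable def diam (r : Fin N → Fin N → ℝ) (c : ℕ) : ℝ :=
  sSup (Set.image2 r (initial N c) (initial N c))

section Extremal

variable (r : Fin N → Fin N → ℝ)

lemma nearestDist_le {c : ℕ} {x : Fin N} (hx : x.1 < c) (t : Fin N) :
    nearestDist r c t ≤ r x t :=
  csInf_le ((Finset.finite_toSet _).image _).bddBelow ⟨x, mem_initial.2 hx, rfl⟩

lemma exists_nearestDist_eq {c : ℕ} (h1 : 1 ≤ c) (t : Fin N) :
    ∃ x : Fin N, x.1 < c ∧ r x t = nearestDist r c t := by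
  have hne : (initial N c : Set (Fin N)).Nonempty := ⟨⟨0, t.pos⟩, mem_initial.2 h1⟩
  obtain ⟨x, hx, he⟩ := (hne.image fun x => r x t).csInf_mem ((Finset.finite_toSet _).image _)
  exact ⟨x, mem_initial.1 hx, he⟩

lemma le_diam {c : ℕ} {x y : Fin N} (hx : x.1 < c) (hy : y.1 < c) : r x y ≤ diam r c :=
  le_csSup ((Finset.finite_toSet _).image2 _ (Finset.finite_toSet _)).bddAbove
    ⟨x, mem_initial.2 hx, y, mem_initial.2 hy, rfl⟩

lemma diam_le {c : ℕ} (h1 : 1 ≤ c) (hc : c ≤ N) {b : ℝ}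
    (h : ∀ x y : Fin N, x.1 < c → y.1 < c → r x y ≤ b) : diam r c ≤ b :=
  csSup_le ⟨_, ⟨⟨0, by omega⟩, mem_initial.2 h1, ⟨0, by omega⟩, mem_initial.2 h1, rfl⟩⟩
    fun _ ⟨x, hx, y, hy, he⟩ => he ▸ h x y (mem_initial.1 hx) (mem_initial.1 hy)

lemma exists_diam_eq {c : ℕ} (h1 : 1 ≤ c) (hc : c ≤ N) :
    ∃ x y : Fin N, x.1 < c ∧ y.1 < c ∧ r x y = diam r c := by
  have hne : (initial N c : Set (Fin N)).Nonempty := ⟨⟨0, by omega⟩, mem_initial.2 h1⟩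
  obtain ⟨x, hx, y, hy, he⟩ := (hne.image2 (f := r) hne).csSup_mem
    ((Finset.finite_toSet _).image2 r (Finset.finite_toSet _))
  exact ⟨x, y, mem_initial.1 hx, mem_initial.1 hy, he⟩

lemma two_mul_depthFn {n : ℕ} (h1 : 1 ≤ n) (hn : n ≤ N) : 2 * depthFn r n = diam r n := by
  have hset : {x : ℝ | ∃ i j : Fin n, x = r (Fin.castLE hn i) (Fin.castLE hn j)}
      = Set.image2 r (initial N n) (initial N n) := by
    ext x
    simp only [Set.mem_ofPred_eq, Set.mem_image2, Finset.mem_coe, mem_initial]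
    constructor
    · rintro ⟨i, j, rfl⟩
      exact ⟨_, i.2, _, j.2, rfl⟩
    · rintro ⟨a, ha, b, hb, rfl⟩
      exact ⟨⟨a.1, ha⟩, ⟨b.1, hb⟩, rfl⟩
  rw [depthFn, dif_pos ⟨h1, hn⟩, hset, diam]
  ring

end Extremal

lemma ell_congr {r r' : Fin N → Fin N → ℝ} {n : ℕ}
    (h : ∀ i j : Fin N, i.1 < n → j.1 < n → r i j = r' i j) : ell r n = ell r' n := by
  unfold ell
  split_ifs with hn
  · have h' : ∀ a b : Fin n, r (Fin.castLE hn.2 a) (Fin.castLE hn.2 b)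
        = r' (Fin.castLE hn.2 a) (Fin.castLE hn.2 b) := fun a b => h _ _ a.2 b.2
    simp only [h']
  · rfl

lemma diam_congr {r r' : Fin N → Fin N → ℝ} {c : ℕ}
    (h : ∀ i j : Fin N, i.1 < c → j.1 < c → r i j = r' i j) : diam r c = diam r' c := by
  rw [diam, diam, Set.image2_congr fun i hi j hj => h i j (mem_initial.1 hi) (mem_initial.1 hj)]

end Ultramat

open Ultramat

namespace IsUltramat

variable {N : ℕ} {r : Fin N → Fin N → ℝ} (hu : IsUltramat r)
include hu

lemma nonneg (i j : Fin N) : 0 ≤ r i j := hu.1 i j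

lemma symm (i j : Fin N) : r i j = r j i := hu.2.1 i j

lemma self (i : Fin N) : r i i = 0 := hu.2.2.1 i

lemma le_max (i j k : Fin N) : r i k ≤ max (r i j) (r j k) := hu.2.2.2 i j k

lemma comp (τ : Equiv.Perm (Fin N)) : IsUltramat fun i j => r (τ i) (τ j) :=
  ⟨fun _ _ => hu.nonneg _ _, fun _ _ => hu.symm _ _, fun _ => hu.self _,
    fun _ _ _ => hu.le_max _ _ _⟩

lemma eq_of_lt {a b c : Fin N} (h : r a b < r b c) : r a c = r b c := by
  refine le_antisymm ((hu.le_max a b c).trans (max_le h.le le_rfl)) (le_of_not_gt fun hlt => ?_)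
  have := hu.le_max b a c
  rw [hu.symm b a] at this
  exact (this.trans_lt (max_lt h hlt)).false

lemma eq_max_of_le {a b c : Fin N} (h : r b c ≤ r a c) : r a c = max (r a b) (r b c) := by
  refine (hu.le_max a b c).antisymm (max_le ?_ h)
  calc r a b ≤ max (r a c) (r c b) := hu.le_max a c b
    _ = r a c := by rw [hu.symm c b, max_eq_left h]

lemma diam_succ {c : ℕ} (h1 : 1 ≤ c) (hc : c < N) :
    diam r (c + 1) = max (diam r c) (nearestDist r c ⟨c, hc⟩) := by
  set t : Fin N := ⟨c, hc⟩
  obtain ⟨k, hk, hkt⟩ := exists_nearestDist_eq r h1 t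
  have hnew : ∀ x : Fin N, x.1 < c → r x t ≤ max (diam r c) (nearestDist r c t) := fun x hx =>
    (hu.le_max x k t).trans (max_le_max (le_diam r hx hk) hkt.le)
  have hsplit : ∀ x : Fin N, x.1 < c + 1 → x.1 < c ∨ x = t := fun x hx => by
    rcases Nat.lt_succ_iff_lt_or_eq.1 hx with h | h
    · exact Or.inl h
    · exact Or.inr (Fin.ext h)
  refine le_antisymm (diam_le r (by omega) hc fun x y hx hy => ?_) (max_le ?_ ?_)
  · rcases hsplit x hx with hx | rfl <;> rcases hsplit y hy with hy | rfl
    · exact (le_diam r hx hy).trans (le_max_left _ _)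
    · exact hnew x hx
    · rw [hu.symm]
      exact hnew y hy
    · rw [hu.self]
      exact (hu.nonneg k k).trans ((le_diam r hk hk).trans (le_max_left _ _))
  · exact diam_le r h1 hc.le fun x y hx hy => le_diam r (by omega) (by omega)
  · exact hkt ▸ le_diam r (by omega) (show t.1 < c + 1 by simp [t])


lemma exists_isRotated_le_getLast_head {l : List (Fin N)} {x z : Fin N} (hx : x ∈ l)
    (hz : z ∈ l) : ∃ (l' : List (Fin N)) (h : l' ≠ []), l' ~r l ∧
      r x z ≤ r (l'.getLast h) (l'.head h) := by
  by_cases hxz : r x z ≤ 0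
  · exact ⟨l, List.ne_nil_of_mem hx, List.IsRotated.refl l, hxz.trans (hu.nonneg _ _)⟩
  obtain ⟨l', h, hrot, hw, hv⟩ := List.exists_isRotated_getLast_head (P := fun y => r x y < r x z)
    hx hz (by rw [hu.self]; exact not_le.1 hxz) (lt_irrefl _)
  refine ⟨l', h, hrot, ?_⟩
  rw [not_lt] at hv
  exact hv.trans (((le_max_iff.1 (hu.le_max _ (l'.getLast h) _)).resolve_left
    (not_le.2 (hw.trans_le hv))))

lemma max_le_insertionCost {c : ℕ} (hc : c < N) {w v : Fin N} (hw : w.1 < c) (hv : v.1 < c) :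
    max (nearestDist r c ⟨c, hc⟩) (2 * nearestDist r c ⟨c, hc⟩ - diam r c)
      ≤ r w ⟨c, hc⟩ + r ⟨c, hc⟩ v - r w v := by
  set t : Fin N := ⟨c, hc⟩
  have hwt := nearestDist_le r hw t
  have hvt := nearestDist_le r hv t
  have hD := le_diam r hw hv
  have hwv := hu.le_max w t v
  rw [hu.symm v t] at hvt
  refine max_le ?_ (by linarith)
  rcases le_total (r w t) (r t v) with h | h
  · rw [max_eq_right h] at hwv
    linarith
  · rw [max_eq_left h] at hwv
    linarith

lemma exists_isRotated_insertionCost_le {c : ℕ} (h1 : 1 ≤ c) (hc : c < N) {l : List (Fin N)}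
    (hl : l ∈ tours N c) : ∃ (l' : List (Fin N)) (h : l' ≠ []), l' ~r l ∧
      r (l'.getLast h) ⟨c, hc⟩ + r ⟨c, hc⟩ (l'.head h) - r (l'.getLast h) (l'.head h)
        ≤ max (nearestDist r c ⟨c, hc⟩) (2 * nearestDist r c ⟨c, hc⟩ - diam r c) := by
  set t : Fin N := ⟨c, hc⟩
  set m := nearestDist r c t
  -- Either insert `t` where the tour leaves the closed `m`-ball around `t` (cost `m`), or, if the
  -- tour stays inside that ball, next to an edge of length at least `diam r c`.
  by_cases hfar : ∃ x ∈ l, m < r x t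
  · obtain ⟨x, hx, hmx⟩ := hfar
    obtain ⟨k, hk, hkm⟩ := exists_nearestDist_eq r h1 t
    obtain ⟨l', h, hrot, hw, hv⟩ := List.exists_isRotated_getLast_head (P := fun y => r y t ≤ m)
      ((mem_iff_of_mem_tours hl).2 hk) hx hkm.le (not_le.2 hmx)
    have hwl := (mem_iff_of_mem_tours hl).1 (hrot.mem_iff.1 (List.getLast_mem h))
    have hwm : r (l'.getLast h) t = m := le_antisymm hw (nearestDist_le r hwl t)
    have htv : r t (l'.head h) = r (l'.getLast h) (l'.head h) :=
      (hu.eq_of_lt (by rw [hwm, hu.symm]; exact not_le.1 hv)).symm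
    refine ⟨l', h, hrot, ?_⟩
    rw [hwm, htv, add_sub_cancel_right]
    exact le_max_left _ _
  · push Not at hfar
    obtain ⟨a, b, ha, hb, hab⟩ := exists_diam_eq r h1 hc.le
    obtain ⟨l', h, hrot, hle⟩ :=
      hu.exists_isRotated_le_getLast_head ((mem_iff_of_mem_tours hl).2 ha) ((mem_iff_of_mem_tours hl).2 hb)
    refine ⟨l', h, hrot, le_trans ?_ (le_max_right _ _)⟩
    have hw := hfar _ (hrot.mem_iff.1 (List.getLast_mem h))
    have hv := hfar _ (hrot.mem_iff.1 (List.head_mem h))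
    rw [hu.symm t]
    linarith

lemma two_mul_ell_succ {c : ℕ} (h1 : 1 ≤ c) (hc : c < N) :
    2 * ell r (c + 1) = 2 * ell r c
      + max (nearestDist r c ⟨c, hc⟩) (2 * nearestDist r c ⟨c, hc⟩ - diam r c) := by
  set t : Fin N := ⟨c, hc⟩
  refine le_antisymm ?_ ?_
  · obtain ⟨l, hl, hlc⟩ := exists_tour_cycleCost_eq hu.self h1 hc.le
    obtain ⟨l', h, hrot, hins⟩ := hu.exists_isRotated_insertionCost_le h1 hc hl
    have hl' : t :: l' ∈ tours N (c + 1) :=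
      (cons_mem_tours_succ_iff hc).2 (mem_tours_of_perm hrot.perm hl)
    calc 2 * ell r (c + 1) ≤ List.cycleCost r (t :: l') :=
          two_mul_ell_le_cycleCost hu.self (by omega) hc hl'
      _ ≤ _ := by
          rw [List.cycleCost_cons r t h, hrot.cycleCost_eq, hlc]
          linarith
  · obtain ⟨l, hl, hlc⟩ := exists_tour_cycleCost_eq hu.self (by omega) hc
    obtain ⟨l₁, l₂, rfl⟩ :=
      List.append_of_mem ((mem_iff_of_mem_tours hl).2 (show t.1 < c + 1 by simp [t]))
    have hrot : t :: (l₂ ++ l₁) ~r l₁ ++ t :: l₂ := by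
      simpa using (List.isRotated_append (l := l₁) (l' := t :: l₂)).symm
    have hL : l₂ ++ l₁ ∈ tours N c :=
      (cons_mem_tours_succ_iff hc).1 (mem_tours_of_perm hrot.perm hl)
    have hne : l₂ ++ l₁ ≠ [] :=
      List.ne_nil_of_length_pos (by rw [length_of_mem_tours hc.le hL]; omega)
    have hw := (mem_iff_of_mem_tours hL).1 (List.getLast_mem hne)
    have hv := (mem_iff_of_mem_tours hL).1 (List.head_mem hne)
    rw [← hlc, ← hrot.cycleCost_eq, List.cycleCost_cons r t hne]
    exact add_le_add (two_mul_ell_le_cycleCost hu.self h1 hc.le hL)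
      (hu.max_le_insertionCost hc hw hv)

lemma two_mul_ell_sub_depthFn {c : ℕ} (h1 : 1 ≤ c) (hc : c < N) :
    2 * (ell r (c + 1) - ell r c - (depthFn r (c + 1) - depthFn r c))
      = nearestDist r c ⟨c, hc⟩ := by
  have hell := hu.two_mul_ell_succ h1 hc
  have hdiam := hu.diam_succ h1 hc
  have hd₁ := two_mul_depthFn r h1 hc.le
  have hd₂ := two_mul_depthFn r (by omega) hc
  rcases le_total (nearestDist r c ⟨c, hc⟩) (diam r c) with h | h
  · rw [max_eq_left (by linarith)] at hell
    rw [max_eq_left h] at hdiam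
    linarith
  · rw [max_eq_right (by linarith)] at hell
    rw [max_eq_right h] at hdiam
    linarith

end IsUltramat

namespace LengthMinimal

variable {r : Fin N → Fin N → ℝ} (hmin : LengthMinimal r)
include hmin

lemma ell_le (τ : Equiv.Perm (Fin N)) {k : ℕ} (hk : k ≤ N)
    (h : ∀ n < k, ell r n = ell (fun i j => r (τ i) (τ j)) n) :
    ell r k ≤ ell (fun i j => r (τ i) (τ j)) k := by
  rcases hmin τ with hall | ⟨n, -, hbelow, hlt⟩
  · exact (hall k hk).le
  rcases lt_trichotomy n k with hnk | rfl | hkn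
  · exact absurd (h n hnk) hlt.ne
  · exact hlt.le
  · exact (hbelow k hkn).le

lemma nearestDist_le_dist_of_le (hu : IsUltramat r) {s : ℕ} (h1 : 1 ≤ s) (hs : s < N)
    {x t : Fin N} (hx : x.1 < s) (ht : s ≤ t.1) : nearestDist r s ⟨s, hs⟩ ≤ r x t := by
  by_contra! hlt
  set τ := Equiv.swap (⟨s, hs⟩ : Fin N) t
  set r' : Fin N → Fin N → ℝ := fun i j => r (τ i) (τ j)
  have hfix : ∀ i : Fin N, i.1 < s → τ i = i := fun i hi =>
    Equiv.swap_apply_of_ne_of_ne (Fin.ne_of_val_ne hi.ne) (Fin.ne_of_val_ne (by omega))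
  have hagree : ∀ n ≤ s, ∀ i j : Fin N, i.1 < n → j.1 < n → r i j = r' i j :=
    fun n hn i j hi hj => by simp only [r', hfix i (by omega), hfix j (by omega)]
  have hnear : nearestDist r' s ⟨s, hs⟩ < nearestDist r s ⟨s, hs⟩ := by
    refine lt_of_le_of_lt (Ultramat.nearestDist_le r' hx _) ?_
    simpa [r', τ, hfix x hx] using hlt
  have hdiam : diam r' s = diam r s := (diam_congr (hagree s le_rfl)).symm
  have hstep := hu.two_mul_ell_succ h1 hs
  have hstep' := (hu.comp τ).two_mul_ell_succ h1 hs
  have hmax : max (nearestDist r' s ⟨s, hs⟩) (2 * nearestDist r' s ⟨s, hs⟩ - diam r' s)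
      < max (nearestDist r s ⟨s, hs⟩) (2 * nearestDist r s ⟨s, hs⟩ - diam r s) :=
    max_lt (lt_max_of_lt_left hnear) (lt_max_of_lt_right (by linarith))
  have hdrop : ell r' (s + 1) < ell r (s + 1) := by
    have := ell_congr (hagree s le_rfl)
    linarith
  exact hdrop.not_ge (hmin.ell_le τ (by omega) fun n hn => ell_congr (hagree n (by omega)))

lemma dist_pred_le (hu : IsUltramat r) {c : ℕ} (hc : c + 1 < N) {x : Fin N} (hx : x.1 ≤ c) :
    r ⟨c, by omega⟩ ⟨c + 1, hc⟩ ≤ r x ⟨c + 1, hc⟩ := by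
  induction c using Nat.strong_induction_on generalizing x with
  | _ c ih =>
  set t : Fin N := ⟨c + 1, hc⟩
  by_contra! hlt
  obtain ⟨j, hj, hjmax⟩ :=
    ({y | y.1 ≤ c ∧ r y t < r ⟨c, by omega⟩ t} : Finset (Fin N)).exists_max_image Fin.val
      ⟨x, by simp [hx, hlt]⟩
  simp only [Finset.mem_filter, Finset.mem_univ, true_and] at hj hjmax
  -- `j` is the last point closer to `t` than `c` is; by induction `j` is a nearest predecessor of
  -- `j + 1`, and greediness at step `j + 1` then pulls `j + 1` as close to `t` as `j`.
  have hjc : j.1 < c := lt_of_le_of_ne hj.1 fun h => by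
    rw [show j = ⟨c, by omega⟩ from Fin.ext h] at hj
    exact lt_irrefl _ hj.2
  set j' : Fin N := ⟨j.1 + 1, by omega⟩
  have hfar : r ⟨c, by omega⟩ t ≤ r j' t :=
    not_lt.1 fun h => Nat.lt_irrefl _ (hjmax j' ⟨hjc, h⟩)
  obtain ⟨y, hy, hye⟩ := exists_nearestDist_eq r (c := j.1 + 1) (by omega) j'
  have hprev : r j j' ≤ r j t :=
    calc r j j' ≤ r y j' := ih j.1 hjc (by omega) (by omega)
      _ = nearestDist r (j.1 + 1) j' := hye
      _ ≤ r j t := hmin.nearestDist_le_dist_of_le hu (by omega) _ (by simp) (by show j.1 + 1 ≤ c + 1; omega)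
  have hj't := hu.le_max j' j t
  rw [hu.symm j' j] at hj't
  exact (hj't.trans (max_le hprev le_rfl)).not_gt (hj.2.trans_le hfar)

lemma nearestDist_eq (hu : IsUltramat r) {c : ℕ} (hc : c + 1 < N) :
    nearestDist r (c + 1) ⟨c + 1, hc⟩ = r ⟨c, by omega⟩ ⟨c + 1, hc⟩ := by
  obtain ⟨y, hy, hye⟩ := exists_nearestDist_eq r (c := c + 1) (by omega) ⟨c + 1, hc⟩
  exact le_antisymm (nearestDist_le r (by simp) _) (hye ▸ hmin.dist_pred_le hu hc (by omega))

end LengthMinimal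

/-- Point `m` is encoded as the index `m−1 : Fin N`; for `k = n−1` the term `r(k,n−1)`
is `r(n−1,n−1) = 0`. -/
theorem lengthMinimal_dist_from_lengths
    {N : ℕ} (r : Fin N → Fin N → ℝ)
    (hult : IsUltramat r)
    (hmin : LengthMinimal r)
    (n : ℕ) (hn2 : 2 ≤ n) (hnN : n ≤ N)
    (k : ℕ) (hk : k ≤ n - 1) :
    r ⟨k - 1, by omega⟩ ⟨n - 1, by omega⟩
      = max (r ⟨k - 1, by omega⟩ ⟨n - 2, by omega⟩)
          (2 * (ell r n - ell r (n - 1) - (depthFn r n - depthFn r (n - 1)))) := by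
  obtain ⟨c, rfl⟩ : ∃ c, n = c + 2 := ⟨n - 2, by omega⟩
  have hc : c + 1 < N := hnN
  show r ⟨k - 1, _⟩ ⟨c + 1, hc⟩ = max (r ⟨k - 1, _⟩ ⟨c, _⟩)
    (2 * (ell r (c + 1 + 1) - ell r (c + 1) - (depthFn r (c + 1 + 1) - depthFn r (c + 1))))
  rw [hult.two_mul_ell_sub_depthFn (by omega) hc, hmin.nearestDist_eq hult hc]
  exact hult.eq_max_of_le (hmin.dist_pred_le hult hc (by show k - 1 ≤ c; omega))
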